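/- arXiv:1506.07729 — 7 statements merged into one kernel-verified Lean document; each statement's English description precedes it below -/
import Mathlib

section
/- Let d ≥ 1 and r ≥ 1 be integers and let a = (a_1,…,a_r) and x = (x_1,…,x_r) be integer vectors with 0 ≤ a_i ≤ d−1 and 0 ≤ x_i ≤ d−1 for all i ∈ {1,…,r}. Then x ≠ a if and only if there exist integers u_1,…,u_r and v_1,…,v_r such that for every i ∈ {1,…,r}: 0 ≤ u_i ≤ d−1, v_i ∈ {0,1}, and x_i = a_i + u_i − d·v_i, and additionally ∑_{i=1}^r u_i ≥ 1. -/
/-- Correctness of the gadget blocking a single boundary assignment `a`: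
for `x, a ∈ {0,…,d-1}^r`, we have `x ≠ a` iff there are integers
`u i ∈ {0,…,d-1}` and `v i ∈ {0,1}` with `x i = a i + u i - d * v i` for all `i`
and `∑ u i ≥ 1`. -/
theorem blocking_gadget_correct (d : ℤ) (hd : 1 ≤ d) (r : ℕ) (hr : 1 ≤ r)
    (a x : Fin r → ℤ)
    (ha : ∀ i, 0 ≤ a i ∧ a i ≤ d - 1)
    (hx : ∀ i, 0 ≤ x i ∧ x i ≤ d - 1) :
    x ≠ a ↔
    ∃ u v : Fin r → ℤ,
      (∀ i, 0 ≤ u i ∧ u i ≤ d - 1 ∧ (v i = 0 ∨ v i = 1) ∧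
        x i = a i + u i - d * v i) ∧
      1 ≤ ∑ i, u i := by
  constructor
  · intro hne
    obtain ⟨j, hj⟩ := Function.ne_iff.mp hne
    set v : Fin r → ℤ := fun i => if x i < a i then 1 else 0 with hv
    refine ⟨fun i => x i - a i + d * v i, v, fun i => ?_, ?_⟩
    · have h1 := ha i; have h2 := hx i
      by_cases h : x i < a i <;> simp [hv, h] <;> constructor <;> omega
    · have hall : ∀ i, 0 ≤ x i - a i + d * v i := by
        intro i
        have h1 := ha i; have h2 := hx i
        by_cases h : x i < a i <;> simp [hv, h] <;> omega
      have hjpos : 1 ≤ x j - a j + d * v j := by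
        have h1 := ha j; have h2 := hx j
        by_cases h : x j < a j <;> simp [hv, h] <;> omega
      calc (1 : ℤ) ≤ x j - a j + d * v j := hjpos
        _ ≤ ∑ i, (x i - a i + d * v i) :=
          Finset.single_le_sum (fun i _ => hall i) (Finset.mem_univ j)
  · rintro ⟨u, v, h, hsum⟩ hxa
    have hz : ∀ i, u i = 0 := by
      intro i
      obtain ⟨h0, h1, h2, h3⟩ := h i
      have := congrFun hxa i
      rcases h2 with h2 | h2 <;> rw [h2] at h3 <;>
        simp only [mul_zero, mul_one] at h3 <;> omega
    simp only [hz, Finset.sum_const_zero] at hsum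
    omega
end

section
/- Let d ≥ 1 and r ≥ 1 be integers and let L ⊆ {0,…,d−1}^r be a set of r-tuples with |L| = ℓ. Then there exist a matrix A' ∈ ℤ^{m'×n'} and a vector b' ∈ ℤ^{m'} with n' = r + 2rℓ variables and m' = 2r + (6r+1)ℓ constraints, all entries of A' and all entries of b' lying in {−d,…,d}, such that for every integer vector a = (a_1,…,a_r): there exists an integer solution x of A'x ≤ b' whose first r coordinates equal a if and only if a ∈ {0,…,d−1}^r \ L. -/
/-!
For a blocked tuple `f` and a point `x` of the box `{0,…,d-1}^r`, the constraints
`x_i = f_i + u_i - d v_i`, `0 ≤ u_i ≤ d-1`, `v_i ∈ {0,1}` are solved by the digits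
`u_i = (x_i - f_i) mod d` and the borrows `v_i` of the digitwise subtraction `x - f` in base `d`.
If `x = f` they force `u = d v`, hence `u = 0`; if `x ≠ f` some digit is nonzero. So `∑ u_i ≥ 1`
excludes `f` and no other point of the box, and one such block of variables per element of `L`,
together with the box constraints, gives the system.
-/

open Matrix

lemma exists_sumElim_iff {α β γ : Type*} (P : (α ⊕ β → γ) → Prop) (x : α → γ) :
    (∃ y, P y ∧ ∀ i, y (.inl i) = x i) ↔ ∃ z, P (Sum.elim x z) := by
  refine ⟨fun ⟨y, hy, hx⟩ => ⟨y ∘ .inr, ?_⟩, fun ⟨z, hz⟩ => ⟨_, hz, fun _ => rfl⟩⟩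
  convert hy
  ext (i | j) <;> simp [hx]

lemma exists_reindex_mulVec_le_iff {m n m' n' R : Type*} [Fintype n] [Fintype n']
    [NonUnitalNonAssocSemiring R] [Preorder R]
    (eR : m ≃ m') (eV : n ≃ n') (A : Matrix m n R) (b : m → R) (P : (n → R) → Prop) :
    (∃ x, reindex eR eV A *ᵥ x ≤ b ∘ eR.symm ∧ P (x ∘ eV)) ↔ ∃ y, A *ᵥ y ≤ b ∧ P y := by
  have key : ∀ x, reindex eR eV A *ᵥ x ≤ b ∘ eR.symm ↔ A *ᵥ (x ∘ eV) ≤ b := fun x => by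
    simp only [reindex_apply, submatrix_mulVec_equiv, Equiv.symm_symm, Pi.le_def,
      Function.comp_apply]
    exact (eR.symm.surjective.forall (p := fun i => (A *ᵥ (x ∘ eV)) i ≤ b i)).symm
  refine ⟨fun ⟨x, hx, hP⟩ => ⟨x ∘ eV, (key x).1 hx, hP⟩, fun ⟨y, hy, hP⟩ => ⟨y ∘ eV.symm, ?_, ?_⟩⟩
  · exact (key _).2 (by simpa [Function.comp_assoc] using hy)
  · simpa [Function.comp_assoc] using hP

section Witness

variable {r : ℕ} {d : ℤ} {x f u v : Fin r → ℤ}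

def IsBlockingWitness (d : ℤ) (x f u v : Fin r → ℤ) : Prop :=
  (∀ i, x i - u i + d * v i = f i ∧ 0 ≤ u i ∧ u i ≤ d - 1 ∧ 0 ≤ v i ∧ v i ≤ 1) ∧ 1 ≤ ∑ i, u i

theorem IsBlockingWitness.ne (h : IsBlockingWitness d x f u v) : x ≠ f := by
  rintro rfl
  have hu : ∀ i, u i = 0 := fun i => by
    obtain ⟨heq, -, hu_lt, hv₀, hv₁⟩ := h.1 i
    -- `u i = d * v i < d` forces `v i = 0`
    rcases (show v i = 0 ∨ v i = 1 by omega) with hv | hv <;> rw [hv] at heq <;> omega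
  simpa [hu] using h.2

theorem exists_isBlockingWitness (hx : ∀ i, 0 ≤ x i ∧ x i ≤ d - 1)
    (hf : ∀ i, 0 ≤ f i ∧ f i ≤ d - 1) (hne : x ≠ f) : ∃ u v, IsBlockingWitness d x f u v := by
  let v : Fin r → ℤ := fun i => if x i < f i then 1 else 0
  have hdigit : ∀ i, 0 ≤ x i - f i + d * v i ∧ x i - f i + d * v i ≤ d - 1 ∧
      (x i ≠ f i → 1 ≤ x i - f i + d * v i) := fun i => by
    have := hx i; have := hf i
    simp only [v]
    split_ifs <;> omega
  refine ⟨fun i => x i - f i + d * v i, v, fun i => ⟨by ring, (hdigit i).1, (hdigit i).2.1, ?_⟩, ?_⟩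
  · simp only [v]; split_ifs <;> omega
  · obtain ⟨j, hj⟩ := Function.ne_iff.1 hne
    exact ((hdigit j).2.2 hj).trans
      (Finset.single_le_sum (fun i _ => (hdigit i).1) (Finset.mem_univ j))

end Witness

namespace BlockingSystem

/-- The variables: the boundary variables `x`, then the digits `u` and the borrows `v` of every
block. -/
abbrev Col (ι : Type*) (r : ℕ) := Fin r ⊕ (ι × Fin r ⊕ ι × Fin r)

/-- The two-sided constraints (box constraints on all variables, then the equations) as `≤` rows
and as `≥` rows, followed by one row `∑ᵢ u_{k,i} ≥ 1` per block `k`. -/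
abbrev Row (ι : Type*) (r : ℕ) := ((Col ι r ⊕ ι × Fin r) ⊕ (Col ι r ⊕ ι × Fin r)) ⊕ ι

variable {ι : Type*} {r : ℕ} (d : ℤ)

def upperBound : Col ι r → ℤ := Sum.elim (fun _ => d - 1) (Sum.elim (fun _ => d - 1) fun _ => 1)

def rhs (f : ι → Fin r → ℤ) : Row ι r → ℤ :=
  let target : ι × Fin r → ℤ := fun p => f p.1 p.2
  Sum.elim (Sum.elim (Sum.elim (upperBound d) target) (-Sum.elim (0 : Col ι r → ℤ) target)) (-1)

variable {d}

lemma abs_rhs_apply_le {f : ι → Fin r → ℤ} (hd : 1 ≤ d) (hf : ∀ k i, 0 ≤ f k i ∧ f k i ≤ d - 1)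
    (i : Row ι r) : |rhs d f i| ≤ d := by
  rw [abs_le]
  rcases i with ((((j | q | q) | p) | ((j | q | q) | p)) | k) <;> simp [rhs, upperBound] <;>
    first | omega | (have := hf p.1 p.2; omega)

variable [DecidableEq ι] (r) (d)

/-- Row `(k, i)` is `x_i - u_{k,i} + d v_{k,i}`. -/
def equations : Matrix (ι × Fin r) (Col ι r) ℤ :=
  fromCols ((1 : Matrix (Fin r) (Fin r) ℤ).submatrix Prod.snd id)
    (fromCols (-1) (diagonal fun _ => d))

def digitSums : Matrix ι (Col ι r) ℤ :=
  fromCols 0 (fromCols ((1 : Matrix ι ι ℤ).submatrix id Prod.fst) 0)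

def twoSided : Matrix (Col ι r ⊕ ι × Fin r) (Col ι r) ℤ := fromRows 1 (equations r d)

def matrix : Matrix (Row ι r) (Col ι r) ℤ :=
  fromRows (fromRows (twoSided r d) (-twoSided r d)) (-digitSums r)

variable {r d}

lemma abs_matrix_apply_le (hd : 1 ≤ d) (i : Row ι r) (j : Col ι r) : |matrix r d i j| ≤ d := by
  rcases i with (((c | p) | (c | p)) | k) <;> rcases j with (j | q | q) <;>
    simp [matrix, twoSided, equations, digitSums, one_apply, diagonal_apply] <;>
    (try split_ifs) <;> (try simp [abs_of_pos (show 0 < d by omega)]) <;> omega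

variable [Fintype ι]

lemma equations_mulVec (x : Fin r → ℤ) (u v : ι × Fin r → ℤ) :
    equations r d *ᵥ Sum.elim x (Sum.elim u v) = fun p => x p.2 - u p + d * v p := by
  simp only [equations, fromCols_mulVec_sumElim, neg_mulVec, one_mulVec]
  ext ⟨k, i⟩
  simp [mulVec, dotProduct, one_apply, sub_eq_add_neg, add_assoc]

lemma digitSums_mulVec (x : Fin r → ℤ) (u v : ι × Fin r → ℤ) :
    digitSums r *ᵥ Sum.elim x (Sum.elim u v) = fun k => ∑ i, u (k, i) := by
  ext k
  simp only [mulVec, dotProduct, digitSums, Fintype.sum_sum_type, fromCols_apply_inl,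
    Matrix.zero_apply, Sum.elim_inl, zero_mul, Finset.sum_const_zero, fromCols_apply_inr,
    Sum.elim_inr, submatrix_apply, one_apply, id_eq, ite_mul, one_mul, Fintype.sum_prod_type,
    add_zero, zero_add]
  rw [Finset.sum_comm]
  simp

lemma matrix_mulVec_le_iff (f : ι → Fin r → ℤ) (x : Fin r → ℤ) (u v : ι × Fin r → ℤ) :
    matrix r d *ᵥ Sum.elim x (Sum.elim u v) ≤ rhs d f ↔
      (∀ i, 0 ≤ x i ∧ x i ≤ d - 1) ∧
        ∀ k, IsBlockingWitness d x (f k) (fun i => u (k, i)) (fun i => v (k, i)) := by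
  simp only [matrix, rhs, twoSided, fromRows_mulVec, Sum.elim_le_elim_iff, one_mulVec,
    equations_mulVec, digitSums_mulVec, neg_mulVec, neg_le_neg_iff]
  simp only [upperBound, Pi.le_def, Sum.forall, Sum.elim_inl, Order.le_sub_one_iff, Sum.elim_inr,
    Prod.forall, Pi.zero_apply, Pi.one_apply, forall_and, IsBlockingWitness, le_antisymm_iff]
  tauto

theorem exists_matrix_mulVec_le_iff {f : ι → Fin r → ℤ}
    (hf : ∀ k i, 0 ≤ f k i ∧ f k i ≤ d - 1) (x : Fin r → ℤ) :
    (∃ y, matrix r d *ᵥ y ≤ rhs d f ∧ ∀ i, y (.inl i) = x i) ↔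
      (∀ i, 0 ≤ x i ∧ x i ≤ d - 1) ∧ x ∉ Set.range f := by
  refine (exists_sumElim_iff (fun y => matrix r d *ᵥ y ≤ rhs d f) x).trans ⟨?_, ?_⟩
  · rintro ⟨z, hz⟩
    rw [← Sum.elim_comp_inl_inr z, matrix_mulVec_le_iff] at hz
    exact ⟨hz.1, fun ⟨k, hk⟩ => (hz.2 k).ne hk.symm⟩
  · rintro ⟨hx, hx_notMem⟩
    choose u v hw using fun k =>
      exists_isBlockingWitness hx (hf k) fun h => hx_notMem ⟨k, h.symm⟩
    exact ⟨_, (matrix_mulVec_le_iff f x (fun p => u p.1 p.2) (fun p => v p.1 p.2)).2 ⟨hx, hw⟩⟩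

end BlockingSystem

theorem replacement_system_for_blocked_list_general (d : ℤ) (hd : 1 ≤ d) (r ℓ : ℕ)
    (L : Finset (Fin r → ℤ))
    (hL : ∀ f ∈ L, ∀ i, 0 ≤ f i ∧ f i ≤ d - 1)
    (hcard : L.card = ℓ) :
    ∃ (A' : Matrix (Fin (2 * r + (6 * r + 1) * ℓ)) (Fin (r + 2 * r * ℓ)) ℤ)
      (b' : Fin (2 * r + (6 * r + 1) * ℓ) → ℤ),
      (∀ i j, -d ≤ A' i j ∧ A' i j ≤ d) ∧
      (∀ i, -d ≤ b' i ∧ b' i ≤ d) ∧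
      ∀ a : Fin r → ℤ,
        (∃ x : Fin (r + 2 * r * ℓ) → ℤ, A'.mulVec x ≤ b' ∧
          ∀ j : Fin r, x (Fin.castLE (Nat.le_add_right r (2 * r * ℓ)) j) = a j) ↔
        ((∀ i, 0 ≤ a i ∧ a i ≤ d - 1) ∧ a ∉ L) := by
  have hf : ∀ (f : L) i, 0 ≤ f.1 i ∧ f.1 i ≤ d - 1 := fun f => hL f f.2
  have hcol : Fintype.card (L × Fin r ⊕ L × Fin r) = 2 * r * ℓ := by simp [hcard]; ring
  have hrow : Fintype.card (BlockingSystem.Row L r) = 2 * r + (6 * r + 1) * ℓ := by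
    simp [hcard]; ring
  let eR := Fintype.equivFinOfCardEq hrow
  let eV : BlockingSystem.Col L r ≃ Fin (r + 2 * r * ℓ) :=
    (Equiv.sumCongr (Equiv.refl _) (Fintype.equivFinOfCardEq hcol)).trans finSumFinEquiv
  refine ⟨reindex eR eV (BlockingSystem.matrix r d), BlockingSystem.rhs d Subtype.val ∘ eR.symm,
    fun i j => abs_le.1 (BlockingSystem.abs_matrix_apply_le hd _ _),
    fun i => abs_le.1 (BlockingSystem.abs_rhs_apply_le hd hf _), fun a => ?_⟩
  -- `eV (.inl j)` unfolds to `Fin.castLE _ j`, so the boundary condition transfers unchanged.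
  refine (exists_reindex_mulVec_le_iff eR eV _ _ (fun y => ∀ i, y (.inl i) = a i)).trans ?_
  rw [BlockingSystem.exists_matrix_mulVec_le_iff hf, Subtype.range_coe,
    Finset.mem_coe]

/-- Realizing the complement of a list `L` of forbidden boundary assignments by a
small explicit system: with `ℓ = |L|` there is a system `A' x ≤ b'` on
`r + 2rℓ` variables and `2r + (6r+1)ℓ` constraints, all entries in `{-d,…,d}`,
whose feasible assignments to the first `r` variables are exactly
`{0,…,d-1}^r \ L`. -/
theorem replacement_system_for_blocked_list (d : ℤ) (hd : 1 ≤ d) (r ℓ : ℕ)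
    (hr : 1 ≤ r) (L : Finset (Fin r → ℤ))
    (hL : ∀ f ∈ L, ∀ i, 0 ≤ f i ∧ f i ≤ d - 1)
    (hcard : L.card = ℓ) :
    ∃ (A' : Matrix (Fin (2 * r + (6 * r + 1) * ℓ)) (Fin (r + 2 * r * ℓ)) ℤ)
      (b' : Fin (2 * r + (6 * r + 1) * ℓ) → ℤ),
      (∀ i j, -d ≤ A' i j ∧ A' i j ≤ d) ∧
      (∀ i, -d ≤ b' i ∧ b' i ≤ d) ∧
      ∀ a : Fin r → ℤ,
        (∃ x : Fin (r + 2 * r * ℓ) → ℤ, A'.mulVec x ≤ b' ∧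
          ∀ j : Fin r, x (Fin.castLE (Nat.le_add_right r (2 * r * ℓ)) j) = a j) ↔
        ((∀ i, 0 ≤ a i ∧ a i ≤ d - 1) ∧ a ∉ L) :=
  replacement_system_for_blocked_list_general d hd r ℓ L hL hcard
end

section
/- For all integers d ≥ 1 and r ≥ 1 and every set A ⊆ {0,…,d−1}^r, there exist a matrix A' ∈ ℤ^{m'×n'} and a vector b' ∈ ℤ^{m'} with n' ≤ r + 2r·d^r and m' ≤ 2r + (6r+1)·d^r, all entries of A' and b' in {−d,…,d}, such that the set of feasible boundary assignments of the system A'x ≤ b' with the first r variables as boundary is exactly A; that is, for every integer vector a ∈ ℤ^r, some integer solution of A'x ≤ b' has first r coordinates equal to a if and only if a ∈ A. -/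
/-!
Enumerate `A = {v₁, …, v_k}`; there are at most `d ^ r` of them since they lie in the box
`{0, …, d-1}^r`. Take as variables the boundary `x` together with one selector `y_t` per point,
and impose `x = ∑ t, y_t v_t`, `∑ t, y_t = 1`, `y ≥ 0`. Over the integers these force `y` to be a
unit vector, so the feasible boundary values are exactly the `v_t`. All coefficients are `0`, `±1`
or `±v_t i`, hence lie in `[-d, d]`.
-/

open Matrix

section Feasibility

variable {ρ σ κ : Type*} [Fintype σ]

def feasibleBoundary (M : Matrix ρ σ ℤ) (b : ρ → ℤ) (ι : κ → σ) : Set (κ → ℤ) :=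
  {a | ∃ x, M *ᵥ x ≤ b ∧ ∀ j, x (ι j) = a j}

lemma feasibleBoundary_reindex {ρ' σ' : Type*} [Fintype σ'] (M : Matrix ρ σ ℤ) (b : ρ → ℤ)
    (ι : κ → σ) (e : ρ ≃ ρ') (f : σ ≃ σ') :
    feasibleBoundary (reindex e f M) (b ∘ e.symm) (f ∘ ι) = feasibleBoundary M b ι := by
  have hle : ∀ x : σ → ℤ, reindex e f M *ᵥ (x ∘ f.symm) ≤ b ∘ e.symm ↔ M *ᵥ x ≤ b := by
    intro x
    rw [reindex_apply, submatrix_mulVec_equiv, Equiv.symm_symm, Function.comp_assoc,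
      f.symm_comp_self, Function.comp_id]
    simp only [Pi.le_def, Function.comp_apply]
    exact (e.symm.surjective.forall (p := fun i => (M *ᵥ x) i ≤ b i)).symm
  ext a
  constructor
  · rintro ⟨x, hx, hxa⟩
    exact ⟨x ∘ f, (hle _).1 (by rwa [Function.comp_assoc, f.self_comp_symm]), hxa⟩
  · rintro ⟨x, hx, hxa⟩
    exact ⟨x ∘ f.symm, (hle x).2 hx, fun j => by simp [hxa j]⟩

end Feasibility

lemma Matrix.fromRows_neg_mulVec_le_iff {R m n : Type*} [Ring R] [PartialOrder R]
    [IsOrderedAddMonoid R] [Fintype n] (C : Matrix m n R) (c : m → R) (x : n → R) :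
    fromRows C (-C) *ᵥ x ≤ Sum.elim c (-c) ↔ C *ᵥ x = c := by
  rw [fromRows_mulVec, Sum.elim_le_elim_iff, neg_mulVec, neg_le_neg_iff, le_antisymm_iff]

lemma Int.exists_eq_single_of_nonneg_of_sum_eq_one {τ : Type*} [Fintype τ] [DecidableEq τ]
    {y : τ → ℤ} (hy : 0 ≤ y) (hsum : ∑ t, y t = 1) : ∃ t, y = Pi.single t 1 := by
  obtain ⟨t, ht⟩ : ∃ t, y t ≠ 0 := by
    by_contra! h
    simp [h] at hsum
  have hsplit := Finset.add_sum_erase _ y (Finset.mem_univ t)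
  have hrest_nonneg := Finset.sum_nonneg fun s (_ : s ∈ Finset.univ.erase t) => hy s
  have hyt : y t = 1 := by
    have : 1 ≤ y t := by have : 0 ≤ y t := hy t; omega
    linarith
  have hrest : ∀ s ∈ Finset.univ.erase t, y s = 0 :=
    (Finset.sum_eq_zero_iff_of_nonneg fun s _ => hy s).1 (by linarith)
  refine ⟨t, funext fun s => ?_⟩
  by_cases hs : s = t
  · simp [hs, hyt]
  · simp [hs, hrest s (by simp [hs])]

section Selector

variable {κ τ : Type*}

def selectorEqRhs : κ ⊕ Unit → ℤ := Sum.elim 0 1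

def selectorRhs : ((κ ⊕ Unit) ⊕ (κ ⊕ Unit)) ⊕ τ → ℤ :=
  Sum.elim (Sum.elim selectorEqRhs (-selectorEqRhs)) 0

lemma abs_selectorRhs_le (p : ((κ ⊕ Unit) ⊕ (κ ⊕ Unit)) ⊕ τ) : |selectorRhs p| ≤ 1 := by
  rcases p with ((i | u) | (i | u)) | t <;> simp [selectorRhs, selectorEqRhs]

lemma card_selectorRows [Fintype κ] [Fintype τ] :
    Fintype.card (((κ ⊕ Unit) ⊕ (κ ⊕ Unit)) ⊕ τ) = 2 * (Fintype.card κ + 1) + Fintype.card τ := by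
  simp only [Fintype.card_sum, Fintype.card_unit]
  ring

variable [DecidableEq κ] [DecidableEq τ]

/-- On variables `Sum.elim x y`, the rows `κ` say `x = y ᵥ* of v` and the row `Unit` says
`∑ t, y t = 1`. -/
def selectorEqMatrix (v : τ → κ → ℤ) : Matrix (κ ⊕ Unit) (κ ⊕ τ) ℤ :=
  fromBlocks 1 (-(of v)ᵀ) 0 (of fun _ _ => 1)

def selectorMatrix (v : τ → κ → ℤ) : Matrix (((κ ⊕ Unit) ⊕ (κ ⊕ Unit)) ⊕ τ) (κ ⊕ τ) ℤ :=
  fromRows (fromRows (selectorEqMatrix v) (-selectorEqMatrix v)) (fromCols 0 (-1))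

lemma abs_selectorMatrix_apply_le {c : ℤ} (hc : 1 ≤ c) {v : τ → κ → ℤ}
    (hv : ∀ t i, |v t i| ≤ c) (p : ((κ ⊕ Unit) ⊕ (κ ⊕ Unit)) ⊕ τ) (q : κ ⊕ τ) :
    |selectorMatrix v p q| ≤ c := by
  have hc₀ : 0 ≤ c := by omega
  rcases p with ((i | u) | (i | u)) | t <;> rcases q with j | s <;>
    simp [selectorMatrix, selectorEqMatrix, one_apply, apply_ite (|·|), hv, hc, hc₀] <;>
    split_ifs <;> omega

variable [Fintype κ] [Fintype τ]

lemma selectorMatrix_mulVec_le_iff (v : τ → κ → ℤ) (x : κ → ℤ) (y : τ → ℤ) :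
    selectorMatrix v *ᵥ Sum.elim x y ≤ selectorRhs ↔
      x = y ᵥ* of v ∧ ∑ t, y t = 1 ∧ 0 ≤ y := by
  rw [selectorMatrix, selectorRhs, fromRows_mulVec, Sum.elim_le_elim_iff,
    fromRows_neg_mulVec_le_iff, selectorEqMatrix, selectorEqRhs, fromBlocks_mulVec]
  simp [funext_iff, mulVec, vecMul, dotProduct, add_neg_eq_zero, mul_comm, and_assoc,
    neg_mulVec]

lemma feasibleBoundary_selectorMatrix (v : τ → κ → ℤ) :
    feasibleBoundary (selectorMatrix v) selectorRhs Sum.inl = Set.range v := by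
  ext a
  constructor
  · rintro ⟨x, hx, hxa⟩
    rw [← Sum.elim_comp_inl_inr x, selectorMatrix_mulVec_le_iff] at hx
    obtain ⟨hxv, hsum, hnonneg⟩ := hx
    obtain ⟨t, ht⟩ := Int.exists_eq_single_of_nonneg_of_sum_eq_one hnonneg hsum
    rw [ht, single_one_vecMul] at hxv
    exact ⟨t, funext fun j => (congrFun hxv j).symm.trans (hxa j)⟩
  · rintro ⟨t, rfl⟩
    refine ⟨Sum.elim (v t) (Pi.single t 1), ?_, fun j => rfl⟩
    rw [selectorMatrix_mulVec_le_iff, single_one_vecMul]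
    exact ⟨rfl, by simp, Pi.single_nonneg.2 zero_le_one⟩

end Selector

lemma exists_fin_range_eq_of_subset_box {ι : Type*} [Fintype ι] (d : ℕ) (A : Set (ι → ℤ))
    (hA : ∀ f ∈ A, ∀ i, 0 ≤ f i ∧ f i ≤ (d : ℤ) - 1) :
    ∃ k ≤ d ^ Fintype.card ι, ∃ v : Fin k → ι → ℤ, Set.range v = A := by
  classical
  set B : Finset (ι → ℤ) := Fintype.piFinset fun _ => Finset.Ico 0 d
  have hAB : A ⊆ B := fun f hf => by
    simp only [B, Finset.mem_coe, Fintype.mem_piFinset, Finset.mem_Ico]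
    intro i
    have := hA f hf i
    omega
  obtain ⟨k, v, hinj, hrange⟩ := (B.finite_toSet.subset hAB).fin_param
  refine ⟨k, ?_, v, hrange⟩
  calc k = A.ncard := by rw [← hrange, Set.ncard_range_of_injective hinj, Nat.card_fin]
    _ ≤ (B : Set (ι → ℤ)).ncard := Set.ncard_le_ncard hAB B.finite_toSet
    _ = d ^ Fintype.card ι := by rw [Set.ncard_coe_finset, Fintype.card_piFinset]; simp

/-- Every set `A ⊆ {0,…,d-1}^r` of boundary assignments is realizable as the set
of feasible boundary assignments of an `r`-boundaried ILP with at most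
`r + 2r·d^r` variables, at most `2r + (6r+1)·d^r` constraints, and all entries
in `{-d,…,d}`. -/
theorem every_boundary_set_realizable (d r : ℕ) (hd : 1 ≤ d) (hr : 1 ≤ r)
    (A : Set (Fin r → ℤ))
    (hA : ∀ f ∈ A, ∀ i, 0 ≤ f i ∧ f i ≤ (d : ℤ) - 1) :
    ∃ (m' n' : ℕ), n' ≤ r + 2 * r * d ^ r ∧ m' ≤ 2 * r + (6 * r + 1) * d ^ r ∧
      ∃ (hrn : r ≤ n') (A' : Matrix (Fin m') (Fin n') ℤ) (b' : Fin m' → ℤ),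
        (∀ i j, -(d : ℤ) ≤ A' i j ∧ A' i j ≤ (d : ℤ)) ∧
        (∀ i, -(d : ℤ) ≤ b' i ∧ b' i ≤ (d : ℤ)) ∧
        ∀ a : Fin r → ℤ,
          (∃ x : Fin n' → ℤ, A'.mulVec x ≤ b' ∧
            ∀ j : Fin r, x (Fin.castLE hrn j) = a j) ↔ a ∈ A := by
  obtain ⟨k, hk, v, rfl⟩ := exists_fin_range_eq_of_subset_box d A hA
  rw [Fintype.card_fin] at hk
  have hv : ∀ t i, |v t i| ≤ d := fun t i => by
    have := hA _ ⟨t, rfl⟩ i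
    exact abs_le.2 ⟨by omega, by omega⟩
  have hdz : (1 : ℤ) ≤ d := by exact_mod_cast hd
  have hpow : 1 ≤ d ^ r := Nat.one_le_pow _ _ hd
  let e := Fintype.equivFin (((Fin r ⊕ Unit) ⊕ (Fin r ⊕ Unit)) ⊕ Fin k)
  refine ⟨_, r + k, by nlinarith, ?_, Nat.le_add_right r k,
    reindex e finSumFinEquiv (selectorMatrix v), selectorRhs ∘ e.symm,
    fun p q => abs_le.1 (abs_selectorMatrix_apply_le hdz hv _ _),
    fun p => abs_le.1 ((abs_selectorRhs_le _).trans hdz), fun a => ?_⟩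
  · rw [card_selectorRows, Fintype.card_fin, Fintype.card_fin]
    nlinarith
  · exact Set.ext_iff.1 ((feasibleBoundary_reindex _ _ Sum.inl e finSumFinEquiv).trans
      (feasibleBoundary_selectorMatrix v)) a
end

section
/- Let U be a finite set, let 𝓕 be a finite family of subsets of U, and let k be a nonnegative integer. Then there exists S ⊆ U with |S| ≤ k and S ∩ F ≠ ∅ for every F ∈ 𝓕 if and only if there exist integers x_{u,F} for u ∈ U, F ∈ 𝓕 and integers x_u for u ∈ U such that: x_{u,F} ∈ {0,1} and x_u ∈ {0,1} for all u, F; for every F ∈ 𝓕, ∑_{u∈F} x_{u,F} ≥ 1; for every u ∈ U, ∑_{F∈𝓕} x_{u,F} ≤ |𝓕|·x_u; and ∑_{u∈U} x_u ≤ k. -/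
/-- Correctness of the reduction from Hitting Set to ILP Feasibility:
`U` has a hitting set of size at most `k` for the family `𝓕` iff the
constructed 0/1-ILP is feasible. -/
theorem hittingSet_iff_ilp {α : Type*} [DecidableEq α] (U : Finset α)
    (𝓕 : Finset (Finset α)) (h𝓕 : ∀ F ∈ 𝓕, F ⊆ U) (k : ℕ) :
    (∃ S ⊆ U, S.card ≤ k ∧ ∀ F ∈ 𝓕, (S ∩ F).Nonempty) ↔
    ∃ (xuF : α → Finset α → ℤ) (xu : α → ℤ),
      (∀ u ∈ U, ∀ F ∈ 𝓕, xuF u F = 0 ∨ xuF u F = 1) ∧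
      (∀ u ∈ U, xu u = 0 ∨ xu u = 1) ∧
      (∀ F ∈ 𝓕, 1 ≤ ∑ u ∈ F, xuF u F) ∧
      (∀ u ∈ U, ∑ F ∈ 𝓕, xuF u F ≤ (𝓕.card : ℤ) * xu u) ∧
      (∑ u ∈ U, xu u ≤ (k : ℤ)) := by
  constructor
  · rintro ⟨S, hSU, hSk, hhit⟩
    refine ⟨fun u _ => if u ∈ S then 1 else 0, fun u => if u ∈ S then 1 else 0,
      ?_, ?_, ?_, ?_, ?_⟩
    · intro u _ F _; by_cases h : u ∈ S <;> simp [h]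
    · intro u _; by_cases h : u ∈ S <;> simp [h]
    · intro F hF
      obtain ⟨u, hu⟩ := hhit F hF
      rw [Finset.mem_inter] at hu
      calc (1 : ℤ) = ∑ v ∈ {u}, (if v ∈ S then (1:ℤ) else 0) := by simp [hu.1]
        _ ≤ ∑ u ∈ F, if u ∈ S then 1 else 0 := by
            apply Finset.sum_le_sum_of_subset_of_nonneg
            · simpa using hu.2
            · intro i _ _; positivity
    · intro u _
      by_cases h : u ∈ S <;> simp [h]
    · calc ∑ u ∈ U, (if u ∈ S then (1:ℤ) else 0) = ∑ u ∈ S, (1:ℤ) := by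
            rw [Finset.sum_ite_mem, Finset.inter_eq_right.mpr hSU]
        _ ≤ k := by simpa using hSk
  · rintro ⟨xuF, xu, h01F, h01, hcov, hlink, hsum⟩
    refine ⟨U.filter (fun u => xu u = 1), Finset.filter_subset _ _, ?_, ?_⟩
    · have : ((U.filter (fun u => xu u = 1)).card : ℤ) ≤ k := by
        calc ((U.filter (fun u => xu u = 1)).card : ℤ)
            = ∑ u ∈ U.filter (fun u => xu u = 1), 1 := by simp
          _ = ∑ u ∈ U.filter (fun u => xu u = 1), xu u := by
              apply Finset.sum_congr rfl; intro u hu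
              exact ((Finset.mem_filter.mp hu).2).symm
          _ ≤ ∑ u ∈ U, xu u := by
              apply Finset.sum_le_sum_of_subset_of_nonneg (Finset.filter_subset _ _)
              intro i hi _
              rcases h01 i hi with h | h <;> simp [h]
          _ ≤ k := hsum
      exact_mod_cast this
    · intro F hF
      have hFU := h𝓕 F hF
      -- there exists u ∈ F with xuF u F = 1
      have : ∃ u ∈ F, xuF u F = 1 := by
        by_contra hcon
        push_neg at hcon
        have : ∑ u ∈ F, xuF u F ≤ 0 := by
          apply Finset.sum_nonpos
          intro u hu
          rcases h01F u (hFU hu) F hF with h | h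
          · simp [h]
          · exact absurd h (hcon u hu)
        linarith [hcov F hF]
      obtain ⟨u, huF, hu1⟩ := this
      have huU : u ∈ U := hFU huF
      have h1 : (1 : ℤ) ≤ ∑ F' ∈ 𝓕, xuF u F' := by
        calc (1 : ℤ) = ∑ F' ∈ ({F} : Finset (Finset α)), xuF u F' := by simp [hu1]
          _ ≤ ∑ F' ∈ 𝓕, xuF u F' := by
              apply Finset.sum_le_sum_of_subset_of_nonneg (by simpa using hF)
              intro G hG _
              rcases h01F u huU G hG with h | h <;> simp [h]
      have hxu : xu u = 1 := by
        rcases h01 u huU with h | h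
        · exfalso
          have := hlink u huU
          rw [h, mul_zero] at this
          linarith
        · exact h
      exact ⟨u, Finset.mem_inter.mpr ⟨Finset.mem_filter.mpr ⟨huU, hxu⟩, huF⟩⟩
end

section
/- Let U be a finite set and 𝓕 a finite family of subsets of U, and let A be the integer matrix with columns indexed by (U × 𝓕) ∪ U and rows of the following five kinds: (i) for each F ∈ 𝓕, a row with entry −1 in column (u,F) for every u ∈ F and zero elsewhere; (ii) for each u ∈ U, a row with entry 1 in column (u,F) for every F ∈ 𝓕, entry −|𝓕| in column u, and zero elsewhere; (iii) one row with entry 1 in column u for every u ∈ U and zero elsewhere; (iv) and (v) for each column, two rows each having a single nonzero entry, equal to 1 respectively −1, in that column. Then the matrix obtained from A by replacing each of the |U| entries equal to −|𝓕| by 0 is totally unimodular; consequently, A is obtained from a totally unimodular matrix by changing at most |U| entries. -/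
/-- A matrix whose every column contains at most one `1` and at most one `-1`
(and zeros elsewhere) is totally unimodular. -/
lemma tu_of_column_signs {m n : Type*} (A : Matrix m n ℤ)
    (h01 : ∀ i j, A i j = 0 ∨ A i j = 1 ∨ A i j = -1)
    (hp : ∀ j i₁ i₂, A i₁ j = 1 → A i₂ j = 1 → i₁ = i₂)
    (hm : ∀ j i₁ i₂, A i₁ j = -1 → A i₂ j = -1 → i₁ = i₂) :
    A.IsTotallyUnimodular := by
  intro k
  induction k with
  | zero => intro f g _ _; exact ⟨1, by simp⟩
  | succ k ih =>
    intro f g hf hg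
    set M := A.submatrix f g with hM
    by_cases hall : ∀ j, ∑ i, M i j = 0
    · refine ⟨0, ?_⟩
      symm
      classical
      rw [show SignType.cast 0 = (0 : ℤ) from rfl, ← Matrix.exists_vecMul_eq_zero_iff]
      refine ⟨fun _ => 1, ?_, ?_⟩
      · intro h
        simpa using congrFun h 0
      · funext j
        simpa [Matrix.vecMul, dotProduct] using hall j
    · push_neg at hall
      obtain ⟨j, hj⟩ := hall
      -- column j of M has exactly one nonzero entry
      have hone : ∃ i₀, M i₀ j ≠ 0 ∧ ∀ i, i ≠ i₀ → M i j = 0 := by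
        by_contra hno
        push_neg at hno
        apply hj
        by_cases hex : ∃ i, M i j ≠ 0
        · obtain ⟨i₁, h1⟩ := hex
          obtain ⟨i₂, hne, h2⟩ := hno i₁ h1
          -- both nonzero; they must be a +1 and a -1
          have key : (M i₁ j = 1 ∧ M i₂ j = -1) ∨ (M i₁ j = -1 ∧ M i₂ j = 1) := by
            rcases h01 (f i₁) (g j) with ha | ha | ha <;>
              rcases h01 (f i₂) (g j) with hb | hb | hb <;>
              simp only [hM, Matrix.submatrix_apply] at h1 h2 ⊢
            · exact absurd ha h1
            · exact absurd ha h1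
            · exact absurd ha h1
            · exact absurd hb h2
            · exact absurd (hf (hp (g j) _ _ ha hb)) hne.symm
            · exact Or.inl ⟨ha, hb⟩
            · exact absurd hb h2
            · exact Or.inr ⟨ha, hb⟩
            · exact absurd (hf (hm (g j) _ _ ha hb)) hne.symm
          have hzero : ∀ i, i ∉ ({i₁, i₂} : Finset (Fin (k+1))) → M i j = 0 := by
            intro i hi
            simp only [Finset.mem_insert, Finset.mem_singleton, not_or] at hi
            rcases h01 (f i) (g j) with hc | hc | hc
            · exact hc
            · exfalso
              rcases key with ⟨ha, hb⟩ | ⟨ha, hb⟩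
              · exact hi.1 (hf (hp (g j) _ _ hc ha))
              · exact hi.2 (hf (hp (g j) _ _ hc hb))
            · exfalso
              rcases key with ⟨ha, hb⟩ | ⟨ha, hb⟩
              · exact hi.2 (hf (hm (g j) _ _ hc hb))
              · exact hi.1 (hf (hm (g j) _ _ hc ha))
          have : ∑ i ∈ ({i₁, i₂} : Finset (Fin (k+1))), M i j = ∑ i, M i j :=
            Finset.sum_subset (Finset.subset_univ _) (fun x _ hx => hzero x hx)
          rw [← this, Finset.sum_pair hne.symm]
          rcases key with ⟨ha, hb⟩ | ⟨ha, hb⟩ <;> rw [ha, hb] <;> ring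
        · push_neg at hex
          exact Finset.sum_eq_zero fun i _ => hex i
      obtain ⟨i₀, hi₀, hrest⟩ := hone
      rw [Matrix.det_succ_column M j, Fintype.sum_eq_single i₀ (fun i hi => by
        rw [hrest i hi]; ring)]
      change _ ∈ MonoidHom.mrange SignType.castHom.toMonoidHom
      refine mul_mem (mul_mem ?_ ?_) ?_
      · apply pow_mem
        exact ⟨-1, by simp⟩
      · rcases h01 (f i₀) (g j) with hc | hc | hc
        · exact absurd hc hi₀
        · exact ⟨1, by simp [hM, hc]⟩
        · exact ⟨-1, by simp [hM, hc]⟩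
      · exact ih _ _ (hf.comp Fin.succAbove_right_injective)
          (hg.comp Fin.succAbove_right_injective)


/-- Column indices of the Hitting Set constraint matrix: a column for each pair
`(u, F)` with `F ∈ 𝓕`, and a column for each element `u` of the ground set `α`. -/
abbrev HSCols (α : Type) (𝓕 : Finset (Finset α)) : Type :=
  (α × {F // F ∈ 𝓕}) ⊕ α

/-- Row indices of the Hitting Set constraint matrix: a row for each set `F ∈ 𝓕`
(kind (i)), a row for each `u` (kind (ii)), one row (kind (iii)), and two rows
for each column (kinds (iv) and (v)). -/
abbrev HSRows (α : Type) (𝓕 : Finset (Finset α)) : Type :=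
  {F // F ∈ 𝓕} ⊕ (α ⊕ (Unit ⊕ (HSCols α 𝓕 ⊕ HSCols α 𝓕)))

/-- The constraint matrix `A` of the reduction from Hitting Set to ILP
Feasibility. -/
def HSMatrix (α : Type) [DecidableEq α] (𝓕 : Finset (Finset α)) :
    Matrix (HSRows α 𝓕) (HSCols α 𝓕) ℤ :=
  Matrix.of fun r c =>
    match r, c with
    | Sum.inl F, Sum.inl (u, F') => if F' = F ∧ u ∈ F.val then -1 else 0
    | Sum.inl _, Sum.inr _ => 0
    | Sum.inr (Sum.inl u), Sum.inl (u', _) => if u' = u then 1 else 0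
    | Sum.inr (Sum.inl u), Sum.inr u' => if u' = u then -(𝓕.card : ℤ) else 0
    | Sum.inr (Sum.inr (Sum.inl _)), Sum.inl _ => 0
    | Sum.inr (Sum.inr (Sum.inl _)), Sum.inr _ => 1
    | Sum.inr (Sum.inr (Sum.inr (Sum.inl c0))), c => if c = c0 then 1 else 0
    | Sum.inr (Sum.inr (Sum.inr (Sum.inr c0))), c => if c = c0 then -1 else 0

/-- The matrix obtained from `HSMatrix` by replacing each entry `-(𝓕.card)`
(in the coupling rows of kind (ii)) by `0`. -/
def HSMatrixHat (α : Type) [DecidableEq α] (𝓕 : Finset (Finset α)) :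
    Matrix (HSRows α 𝓕) (HSCols α 𝓕) ℤ :=
  Matrix.of fun r c =>
    match r, c with
    | Sum.inl F, Sum.inl (u, F') => if F' = F ∧ u ∈ F.val then -1 else 0
    | Sum.inl _, Sum.inr _ => 0
    | Sum.inr (Sum.inl u), Sum.inl (u', _) => if u' = u then 1 else 0
    | Sum.inr (Sum.inl _), Sum.inr _ => 0
    | Sum.inr (Sum.inr (Sum.inl _)), Sum.inl _ => 0
    | Sum.inr (Sum.inr (Sum.inl _)), Sum.inr _ => 1
    | Sum.inr (Sum.inr (Sum.inr (Sum.inl c0))), c => if c = c0 then 1 else 0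
    | Sum.inr (Sum.inr (Sum.inr (Sum.inr c0))), c => if c = c0 then -1 else 0

/-- The matrix obtained from the Hitting Set constraint matrix `A` by zeroing out
the `|U|` entries equal to `-|𝓕|` is totally unimodular; consequently, `A` is
obtained from a totally unimodular matrix by changing at most `|U|` entries. -/
theorem hsMatrix_totallyUnimodular_plus_card_entries
    (α : Type) [Fintype α] [DecidableEq α] (𝓕 : Finset (Finset α)) :
    (HSMatrixHat α 𝓕).IsTotallyUnimodular ∧
    ∃ B : Matrix (HSRows α 𝓕) (HSCols α 𝓕) ℤ, B.IsTotallyUnimodular ∧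
      (Finset.univ.filter
        (fun rc : HSRows α 𝓕 × HSCols α 𝓕 =>
          B rc.1 rc.2 ≠ HSMatrix α 𝓕 rc.1 rc.2)).card ≤ Fintype.card α := by
  
  classical
  have hHat : (HSMatrixHat α 𝓕).IsTotallyUnimodular := by
    -- core matrix: rows of kinds (i), (ii), (iii)
    set Core : Matrix ({F // F ∈ 𝓕} ⊕ (α ⊕ Unit)) (HSCols α 𝓕) ℤ :=
      Matrix.of fun r c =>
        match r, c with
        | Sum.inl F, Sum.inl (u, F') => if F' = F ∧ u ∈ F.val then -1 else 0
        | Sum.inl _, Sum.inr _ => 0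
        | Sum.inr (Sum.inl u), Sum.inl (u', _) => if u' = u then 1 else 0
        | Sum.inr (Sum.inl _), Sum.inr _ => 0
        | Sum.inr (Sum.inr _), Sum.inl _ => 0
        | Sum.inr (Sum.inr _), Sum.inr _ => 1
      with hCore
    have hCoreTU : Core.IsTotallyUnimodular := by
      apply tu_of_column_signs
      · rintro (F | u | ⟨⟩) (⟨u', F'⟩ | u') <;>
          simp only [hCore, Matrix.of_apply] <;>
          first
          | (split_ifs <;> simp)
          | simp
      · rintro (⟨u', F'⟩ | u') (F₁ | u₁ | ⟨⟩) (F₂ | u₂ | ⟨⟩) h₁ h₂ <;>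
          simp only [hCore, Matrix.of_apply] at h₁ h₂ <;>
          first
          | rfl
          | (split_ifs at h₁ h₂ <;> simp_all)
          | omega
      · rintro (⟨u', F'⟩ | u') (F₁ | u₁ | ⟨⟩) (F₂ | u₂ | ⟨⟩) h₁ h₂ <;>
          simp only [hCore, Matrix.of_apply] at h₁ h₂ <;>
          first
          | rfl
          | (split_ifs at h₁ h₂ <;> simp_all)
          | omega
    set D : Matrix (HSCols α 𝓕 ⊕ HSCols α 𝓕) (HSCols α 𝓕) ℤ :=
      Matrix.of fun r c =>
        match r with
        | Sum.inl c0 => if c = c0 then 1 else 0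
        | Sum.inr c0 => if c = c0 then -1 else 0
      with hD
    have hDrows : Nonempty (HSCols α 𝓕) → ∀ i : HSCols α 𝓕 ⊕ HSCols α 𝓕,
        ∃ j : HSCols α 𝓕, ∃ s : SignType, D i = Pi.single j s.cast := by
      rintro - (c0 | c0)
      · exact ⟨c0, 1, funext fun c => by simp [hD, Pi.single_apply]⟩
      · exact ⟨c0, -1, funext fun c => by simp [hD, Pi.single_apply]⟩
    have hTU : (Matrix.fromRows Core D).IsTotallyUnimodular :=
      hCoreTU.fromRows_unitlike hDrows
    have heq : HSMatrixHat α 𝓕 =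
        (Matrix.fromRows Core D).submatrix
          (fun r : HSRows α 𝓕 =>
            match r with
            | Sum.inl F => Sum.inl (Sum.inl F)
            | Sum.inr (Sum.inl u) => Sum.inl (Sum.inr (Sum.inl u))
            | Sum.inr (Sum.inr (Sum.inl _)) => Sum.inl (Sum.inr (Sum.inr ()))
            | Sum.inr (Sum.inr (Sum.inr x)) => Sum.inr x)
          id := by
      ext r c
      rcases r with F | u | ⟨⟩ | x | x <;> rcases c with ⟨u', F'⟩ | u' <;> rfl
    rw [heq]
    exact hTU.submatrix _ _
  refine ⟨hHat, HSMatrixHat α 𝓕, hHat, ?_⟩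
  calc (Finset.univ.filter
        (fun rc : HSRows α 𝓕 × HSCols α 𝓕 =>
          HSMatrixHat α 𝓕 rc.1 rc.2 ≠ HSMatrix α 𝓕 rc.1 rc.2)).card
      ≤ (Finset.univ.image
          (fun u : α => ((Sum.inr (Sum.inl u) : HSRows α 𝓕),
            (Sum.inr u : HSCols α 𝓕)))).card := by
        apply Finset.card_le_card
        intro rc hrc
        rw [Finset.mem_filter] at hrc
        obtain ⟨-, hdiff⟩ := hrc
        obtain ⟨r, c⟩ := rc
        rcases r with F | u | ⟨⟩ | x | x <;> rcases c with ⟨u', F'⟩ | u' <;>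
          simp only [HSMatrix, HSMatrixHat, Matrix.of_apply, ne_eq] at hdiff <;>
          try exact absurd trivial hdiff
        · by_cases h : u' = u
          · subst h
            simp only [Finset.mem_image, Finset.mem_univ, true_and]
            exact ⟨u', rfl⟩
          · simp [h] at hdiff
    _ ≤ (Finset.univ : Finset α).card := Finset.card_image_le
    _ = Fintype.card α := Finset.card_univ
end

section
/- Let t ≥ 1 be an integer and let s be an integer with 1 ≤ s ≤ t. Let d_1,…,d_t be integers with d_p ∈ {0,1} for all p. Then the following two conditions hold simultaneously — (A) for every p ∈ {1,…,t}: s ≥ p − t·d_p and s ≤ p + t·d_p, and (B) there exist integers c_1,…,c_t with c_ℓ ∈ {0,1} for all ℓ, c_1 = d_1, c_ℓ = c_{ℓ−1} + d_ℓ − 1 for all ℓ ∈ {2,…,t}, and c_t = 0 — if and only if for every p ∈ {1,…,t}: d_p = 0 if p = s and d_p = 1 if p ≠ s. -/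
/-!
If `d` is a 0/1 vector satisfying the window constraints, every `p` with `d p = 0` equals `s`,
so at most one entry vanishes; the chain `c` telescopes, so if no entry vanished it would stay
at `1` up to `c t`. Conversely the indicator of `p ≠ s` is realized by the step chain
`c ℓ = 1` for `ℓ < s` and `c ℓ = 0` afterwards.
-/

namespace SelectorGadget

def selector (s p : ℤ) : ℤ := if p = s then 0 else 1

def stepDown (s ℓ : ℤ) : ℤ := if ℓ < s then 1 else 0

theorem stepDown_eq_sub_one_add_selector (s ℓ : ℤ) :
    stepDown s ℓ = stepDown s (ℓ - 1) + selector s ℓ - 1 := by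
  unfold stepDown selector
  split_ifs <;> omega

theorem stepDown_one {s : ℤ} (hs : 1 ≤ s) : stepDown s 1 = selector s 1 := by
  simpa [stepDown, show (0 : ℤ) < s by omega] using stepDown_eq_sub_one_add_selector s 1

theorem stepDown_of_le {s ℓ : ℤ} (h : s ≤ ℓ) : stepDown s ℓ = 0 := by
  simp [stepDown, not_lt.mpr h]

theorem stepDown_mem_zero_one (s ℓ : ℤ) : stepDown s ℓ = 0 ∨ stepDown s ℓ = 1 := by
  unfold stepDown
  split_ifs <;> simp

theorem selector_window {t s p : ℤ} (hs1 : 1 ≤ s) (hs2 : s ≤ t) (hp1 : 1 ≤ p) (hp2 : p ≤ t) :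
    p - t * selector s p ≤ s ∧ s ≤ p + t * selector s p := by
  unfold selector
  split_ifs <;> omega

theorem eq_of_window_of_eq_zero {t s p d : ℤ} (h : p - t * d ≤ s ∧ s ≤ p + t * d)
    (hd : d = 0) : p = s := by
  subst hd
  omega

theorem chain_eq_one {t : ℤ} {c d : ℤ → ℤ} (hc1 : c 1 = d 1)
    (hrec : ∀ ℓ, 2 ≤ ℓ → ℓ ≤ t → c ℓ = c (ℓ - 1) + d ℓ - 1)
    (hd : ∀ p, 1 ≤ p → p ≤ t → d p = 1) {ℓ : ℤ} (hℓ1 : 1 ≤ ℓ) (hℓt : ℓ ≤ t) : c ℓ = 1 := by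
  induction ℓ, hℓ1 using Int.leInduction with
  | base => rw [hc1, hd 1 le_rfl hℓt]
  | succ ℓ hℓ ih =>
    rw [hrec (ℓ + 1) (by omega) hℓt, add_sub_cancel_right, ih (by omega),
      hd (ℓ + 1) (by omega) hℓt]
    norm_num

theorem exists_eq_zero_of_chain {t : ℤ} (ht : 1 ≤ t) {c d : ℤ → ℤ}
    (hd : ∀ p, 1 ≤ p → p ≤ t → d p = 0 ∨ d p = 1) (hc1 : c 1 = d 1)
    (hrec : ∀ ℓ, 2 ≤ ℓ → ℓ ≤ t → c ℓ = c (ℓ - 1) + d ℓ - 1) (hct : c t = 0) :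
    ∃ p, 1 ≤ p ∧ p ≤ t ∧ d p = 0 := by
  by_contra! h
  have hall : ∀ p, 1 ≤ p → p ≤ t → d p = 1 := fun p hp1 hp2 =>
    (hd p hp1 hp2).resolve_left (h p hp1 hp2)
  have := chain_eq_one hc1 hrec hall ht le_rfl
  omega

end SelectorGadget

open SelectorGadget

theorem selector_gadget_correct_general (t s : ℤ) (hs1 : 1 ≤ s) (hs2 : s ≤ t)
    (d : ℤ → ℤ) (hd : ∀ p, 1 ≤ p → p ≤ t → d p = 0 ∨ d p = 1) :
    ((∀ p, 1 ≤ p → p ≤ t → (p - t * d p ≤ s ∧ s ≤ p + t * d p)) ∧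
      ∃ c : ℤ → ℤ,
        (∀ ℓ, 1 ≤ ℓ → ℓ ≤ t → (c ℓ = 0 ∨ c ℓ = 1)) ∧
        c 1 = d 1 ∧
        (∀ ℓ, 2 ≤ ℓ → ℓ ≤ t → c ℓ = c (ℓ - 1) + d ℓ - 1) ∧
        c t = 0) ↔
    (∀ p, 1 ≤ p → p ≤ t → ((p = s → d p = 0) ∧ (p ≠ s → d p = 1))) := by
  have ht : 1 ≤ t := hs1.trans hs2
  constructor
  · rintro ⟨hA, c, -, hc1, hrec, hct⟩
    have hzero : ∀ p, 1 ≤ p → p ≤ t → d p = 0 → p = s := fun p hp1 hp2 =>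
      eq_of_window_of_eq_zero (hA p hp1 hp2)
    obtain ⟨q, hq1, hqt, hq0⟩ := exists_eq_zero_of_chain ht hd hc1 hrec hct
    intro p hp1 hp2
    refine ⟨fun hps => ?_, fun hps => (hd p hp1 hp2).resolve_left (hps ∘ hzero p hp1 hp2)⟩
    rwa [hps, ← hzero q hq1 hqt hq0]
  · intro hD
    have hsel : ∀ p, 1 ≤ p → p ≤ t → d p = selector s p := fun p hp1 hp2 => by
      unfold selector
      split_ifs with hps
      exacts [(hD p hp1 hp2).1 hps, (hD p hp1 hp2).2 hps]
    refine ⟨fun p hp1 hp2 => hsel p hp1 hp2 ▸ selector_window hs1 hs2 hp1 hp2,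
      stepDown s, fun ℓ _ _ => stepDown_mem_zero_one s ℓ, ?_, fun ℓ hℓ2 hℓt => ?_,
      stepDown_of_le hs2⟩
    · rw [stepDown_one hs1, hsel 1 le_rfl ht]
    · rw [hsel ℓ (by omega) hℓt]
      exact stepDown_eq_sub_one_add_selector s ℓ

/-- Correctness of the instance-selector gadget: for `1 ≤ s ≤ t` and 0/1-values
`d p`, the constraints `p - t·d p ≤ s ≤ p + t·d p` for all `p ∈ {1,…,t}`
together with the chain constraints on `c` are satisfiable iff `d p = 0`
exactly when `p = s` and `d p = 1` otherwise. -/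
theorem selector_gadget_correct (t s : ℤ) (ht : 1 ≤ t) (hs1 : 1 ≤ s) (hs2 : s ≤ t)
    (d : ℤ → ℤ) (hd : ∀ p, 1 ≤ p → p ≤ t → d p = 0 ∨ d p = 1) :
    ((∀ p, 1 ≤ p → p ≤ t → (p - t * d p ≤ s ∧ s ≤ p + t * d p)) ∧
      ∃ c : ℤ → ℤ,
        (∀ ℓ, 1 ≤ ℓ → ℓ ≤ t → (c ℓ = 0 ∨ c ℓ = 1)) ∧
        c 1 = d 1 ∧
        (∀ ℓ, 2 ≤ ℓ → ℓ ≤ t → c ℓ = c (ℓ - 1) + d ℓ - 1) ∧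
        c t = 0) ↔
    (∀ p, 1 ≤ p → p ≤ t → ((p = s → d p = 0) ∧ (p ≠ s → d p = 1))) :=
  selector_gadget_correct_general t s hs1 hs2 d hd
end

section
/- Let n ≥ 1, k ≥ 0, t ≥ 1 be integers and let G_1,…,G_t be simple graphs on vertex set {1,…,n}. Consider the system of linear constraints in integer variables x_1,…,x_n ∈ {0,1}; y_{i,j} ∈ {0,1} for 1 ≤ i < j ≤ n; s with 1 ≤ s ≤ t; and d^{i,j}_p, c^{i,j}_p ∈ {0,1} for 1 ≤ i < j ≤ n and p ∈ {1,…,t}; with constraints: (a) ∑_{i=1}^n x_i ≥ k; (b) x_i + x_j + y_{i,j} ≤ 2 for all 1 ≤ i < j ≤ n; (c) s ≥ p − t·d^{i,j}_p and s ≤ p + t·d^{i,j}_p for all i < j and all p; (d) c^{i,j}_1 = d^{i,j}_1, c^{i,j}_ℓ = c^{i,j}_{ℓ−1} + d^{i,j}_ℓ − 1 for all ℓ ∈ {2,…,t}, and c^{i,j}_t = 0, for all i < j; (e) for all i < j and all p: y_{i,j} ≥ 1 − d^{i,j}_p if {i,j} is an edge of G_p, and y_{i,j} ≤ d^{i,j}_p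 if {i,j} is not an edge of G_p. This system has an integer solution if and only if there exists s* ∈ {1,…,t} such that G_{s*} has an independent set of size at least k. -/
/-!
The chain constraints (d) say `c ℓ = ∑_{p ≤ ℓ} d p - (ℓ - 1)`, so `c t = 0` forces some
`d p` to vanish, and constraint (c) forces that `p` to be the selector `s`. With `d s = 0`,
constraint (e) makes `y i j = 1` on every edge of `G s`, and (b) then forbids selecting both
ends of such an edge: the selected vertices form an independent set of `G s`. Conversely, an
independent set `S` of `G s` gives a solution with `x` the indicator of `S`, `y` the adjacency
indicator of `G s`, `d` the indicator of `p ≠ s`, and `c` the indicator of `ℓ < s`.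
-/

open Finset

section Chain

variable {t : ℤ} {d c : ℤ → ℤ}

theorem chain_eq_sum_sub (h1 : c 1 = d 1)
    (hstep : ∀ ℓ, 2 ≤ ℓ → ℓ ≤ t → c ℓ = c (ℓ - 1) + d ℓ - 1) :
    ∀ ℓ, 1 ≤ ℓ → ℓ ≤ t → c ℓ = ∑ p ∈ Icc 1 ℓ, d p - (ℓ - 1) := by
  intro ℓ hℓ
  induction ℓ, hℓ using Int.leInduction with
  | base => exact fun _ => by simpa using h1
  | succ ℓ hℓ ih =>
    intro hℓt
    rw [hstep (ℓ + 1) (by omega) hℓt, add_sub_cancel_right, ih (by omega),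
      ← insert_Icc_right_eq_Icc_add_one (by omega), sum_insert (by simp)]
    ring

theorem exists_eq_zero_of_chain (hd : ∀ p, 1 ≤ p → p ≤ t → d p = 0 ∨ d p = 1)
    (h1 : c 1 = d 1) (hstep : ∀ ℓ, 2 ≤ ℓ → ℓ ≤ t → c ℓ = c (ℓ - 1) + d ℓ - 1)
    (hct : c t = 0) (ht : 1 ≤ t) : ∃ p, 1 ≤ p ∧ p ≤ t ∧ d p = 0 := by
  have hsum : ∑ p ∈ Icc 1 t, d p < ∑ _p ∈ Icc 1 t, 1 := by
    have := chain_eq_sum_sub h1 hstep t ht le_rfl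
    rw [sum_const, Int.card_Icc, add_sub_cancel_right, nsmul_one,
      Int.toNat_of_nonneg (by omega)]
    omega
  obtain ⟨p, hp, hdp⟩ := exists_lt_of_sum_lt hsum
  obtain ⟨hp1, hpt⟩ := mem_Icc.mp hp
  exact ⟨p, hp1, hpt, (hd p hp1 hpt).resolve_right hdp.ne⟩

theorem eq_zero_at_selector_of_chain {s : ℤ} (hs : 1 ≤ s)
    (hd : ∀ p, 1 ≤ p → p ≤ t → d p = 0 ∨ d p = 1)
    (hsel : ∀ p, 1 ≤ p → p ≤ t → p - t * d p ≤ s ∧ s ≤ p + t * d p)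
    (h1 : c 1 = d 1) (hstep : ∀ ℓ, 2 ≤ ℓ → ℓ ≤ t → c ℓ = c (ℓ - 1) + d ℓ - 1)
    (hct : c t = 0) (hst : s ≤ t) : d s = 0 := by
  obtain ⟨p, hp1, hpt, hdp⟩ := exists_eq_zero_of_chain hd h1 hstep hct (hs.trans hst)
  have := hsel p hp1 hpt
  rw [hdp, mul_zero] at this
  rwa [show s = p by omega]

end Chain

theorem sum_eq_card_filter_eq_one {ι : Type*} [Fintype ι] {x : ι → ℤ}
    (hx : ∀ i, x i = 0 ∨ x i = 1) : ∑ i, x i = #{i | x i = 1} := by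
  rw [card_filter, Nat.cast_sum]
  refine sum_congr rfl fun i _ => ?_
  rcases hx i with h | h <;> simp [h]

theorem SimpleGraph.forall_not_adj_of_forall_lt {V : Type*} [LinearOrder V] {G : SimpleGraph V}
    {S : Finset V} (h : ∀ u v, u < v → u ∈ S → v ∈ S → ¬G.Adj u v) :
    ∀ u ∈ S, ∀ v ∈ S, ¬G.Adj u v := by
  intro u hu v hv
  rcases lt_trichotomy u v with huv | rfl | hvu
  · exact h u v huv hu hv
  · exact G.loopless.irrefl u
  · exact fun hadj => h v u hvu hv hu hadj.symm

section Witness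

def selectorIndicator (s p : ℤ) : ℤ := if p = s then 0 else 1

def prefixIndicator (s ℓ : ℤ) : ℤ := if ℓ < s then 1 else 0

variable {t s : ℤ}

theorem selectorIndicator_eq_zero_or_eq_one (p : ℤ) :
    selectorIndicator s p = 0 ∨ selectorIndicator s p = 1 := by
  unfold selectorIndicator; split_ifs <;> simp

theorem prefixIndicator_eq_zero_or_eq_one (ℓ : ℤ) :
    prefixIndicator s ℓ = 0 ∨ prefixIndicator s ℓ = 1 := by
  unfold prefixIndicator; split_ifs <;> simp

theorem selectorIndicator_bounds (hs : 1 ≤ s) (hst : s ≤ t) (p : ℤ) (hp : 1 ≤ p)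
    (hpt : p ≤ t) :
    p - t * selectorIndicator s p ≤ s ∧ s ≤ p + t * selectorIndicator s p := by
  unfold selectorIndicator; split_ifs <;> omega

theorem prefixIndicator_chain (hs : 1 ≤ s) (hst : s ≤ t) :
    prefixIndicator s 1 = selectorIndicator s 1 ∧
    (∀ ℓ, 2 ≤ ℓ → ℓ ≤ t →
      prefixIndicator s ℓ = prefixIndicator s (ℓ - 1) + selectorIndicator s ℓ - 1) ∧
    prefixIndicator s t = 0 := by
  unfold prefixIndicator selectorIndicator
  refine ⟨?_, fun ℓ _ _ => ?_, if_neg (by omega)⟩ <;> split_ifs <;> omega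

theorem adjIndicator_edge_bounds {V : Type*} (G : ℤ → SimpleGraph V)
    [∀ p, DecidableRel (G p).Adj] (u v : V) (p : ℤ) :
    ((G p).Adj u v → 1 - selectorIndicator s p ≤ if (G s).Adj u v then 1 else 0) ∧
    (¬(G p).Adj u v → (if (G s).Adj u v then 1 else 0) ≤ selectorIndicator s p) := by
  by_cases hp : p = s
  · subst hp; constructor <;> intro h <;> simp [selectorIndicator, h]
  · simp only [selectorIndicator, if_neg hp]; constructor <;> intro _ <;> split_ifs <;> omega

end Witness

theorem crossComposition_correct_general (n k : ℕ) (t : ℤ)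
    (G : ℤ → SimpleGraph (Fin n)) :
    (∃ (x : Fin n → ℤ) (y : Fin n → Fin n → ℤ) (s : ℤ)
        (d c : Fin n → Fin n → ℤ → ℤ),
      -- domains
      (∀ i, x i = 0 ∨ x i = 1) ∧
      (∀ i j : Fin n, i < j → (y i j = 0 ∨ y i j = 1)) ∧
      (1 ≤ s ∧ s ≤ t) ∧
      (∀ i j : Fin n, i < j → ∀ p, 1 ≤ p → p ≤ t →
        ((d i j p = 0 ∨ d i j p = 1) ∧ (c i j p = 0 ∨ c i j p = 1))) ∧
      -- (a) the selected vertices form a set of size at least k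
      ((k : ℤ) ≤ ∑ i, x i) ∧
      -- (b) consistency of the selection with the edge indicators
      (∀ i j : Fin n, i < j → x i + x j + y i j ≤ 2) ∧
      -- (c) the indicator variables d are forced by the selector s
      (∀ i j : Fin n, i < j → ∀ p, 1 ≤ p → p ≤ t →
        (p - t * d i j p ≤ s ∧ s ≤ p + t * d i j p)) ∧
      -- (d) chain constraints enforcing ∑_p d i j p = t - 1
      (∀ i j : Fin n, i < j →
        (c i j 1 = d i j 1 ∧
         (∀ ℓ, 2 ≤ ℓ → ℓ ≤ t → c i j ℓ = c i j (ℓ - 1) + d i j ℓ - 1) ∧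
         c i j t = 0)) ∧
      -- (e) edge indicators of the selected graph
      (∀ i j : Fin n, i < j → ∀ p, 1 ≤ p → p ≤ t →
        (((G p).Adj i j → 1 - d i j p ≤ y i j) ∧
         (¬ (G p).Adj i j → y i j ≤ d i j p)))) ↔
    (∃ s' : ℤ, 1 ≤ s' ∧ s' ≤ t ∧
      ∃ S : Finset (Fin n), k ≤ S.card ∧
        ∀ u ∈ S, ∀ v ∈ S, ¬ (G s').Adj u v) := by
  classical
  constructor
  · rintro ⟨x, y, s, d, c, hx, -, ⟨hs, hst⟩, hdc, hk, hxy, hsel, hchain, hedge⟩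
    refine ⟨s, hs, hst, ({i | x i = 1} : Finset (Fin n)),
      by exact_mod_cast sum_eq_card_filter_eq_one hx ▸ hk,
      SimpleGraph.forall_not_adj_of_forall_lt fun i j hij hi hj hadj => ?_⟩
    obtain ⟨h1, hstep, hct⟩ := hchain i j hij
    have hds : d i j s = 0 := eq_zero_at_selector_of_chain hs
      (fun p hp hpt => (hdc i j hij p hp hpt).1) (hsel i j hij) h1 hstep hct hst
    have hy := (hedge i j hij s hs hst).1 hadj
    have := hxy i j hij
    simp only [mem_filter, mem_univ, true_and] at hi hj
    omega
  · rintro ⟨s, hs, hst, S, hk, hS⟩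
    refine ⟨fun i => if i ∈ S then 1 else 0, fun i j => if (G s).Adj i j then 1 else 0, s,
      fun _ _ => selectorIndicator s, fun _ _ => prefixIndicator s, fun i => ?_, fun i j _ => ?_,
      ⟨hs, hst⟩, fun _ _ _ p _ _ =>
        ⟨selectorIndicator_eq_zero_or_eq_one p, prefixIndicator_eq_zero_or_eq_one p⟩,
      by simpa using hk, fun i j _ => ?_, fun _ _ _ => selectorIndicator_bounds hs hst,
      fun _ _ _ => prefixIndicator_chain hs hst,
      fun i j _ p _ _ => adjIndicator_edge_bounds G i j p⟩
    · dsimp only; split_ifs <;> simp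
    · dsimp only; split_ifs <;> simp
    · dsimp only; split_ifs <;> simp_all

/-- Correctness of the cross-composition of `t` Independent Set instances
`G 1, …, G t`, each on vertex set `Fin n` with target `k`, into a single
ILP Feasibility instance: the constructed system has an integer solution iff
some input graph `G s*` has an independent set of size at least `k`. -/
theorem crossComposition_correct (n k : ℕ) (t : ℤ) (hn : 1 ≤ n) (ht : 1 ≤ t)
    (G : ℤ → SimpleGraph (Fin n)) :
    (∃ (x : Fin n → ℤ) (y : Fin n → Fin n → ℤ) (s : ℤ)
        (d c : Fin n → Fin n → ℤ → ℤ),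
      -- domains
      (∀ i, x i = 0 ∨ x i = 1) ∧
      (∀ i j : Fin n, i < j → (y i j = 0 ∨ y i j = 1)) ∧
      (1 ≤ s ∧ s ≤ t) ∧
      (∀ i j : Fin n, i < j → ∀ p, 1 ≤ p → p ≤ t →
        ((d i j p = 0 ∨ d i j p = 1) ∧ (c i j p = 0 ∨ c i j p = 1))) ∧
      -- (a) the selected vertices form a set of size at least k
      ((k : ℤ) ≤ ∑ i, x i) ∧
      -- (b) consistency of the selection with the edge indicators
      (∀ i j : Fin n, i < j → x i + x j + y i j ≤ 2) ∧
      -- (c) the indicator variables d are forced by the selector s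
      (∀ i j : Fin n, i < j → ∀ p, 1 ≤ p → p ≤ t →
        (p - t * d i j p ≤ s ∧ s ≤ p + t * d i j p)) ∧
      -- (d) chain constraints enforcing ∑_p d i j p = t - 1
      (∀ i j : Fin n, i < j →
        (c i j 1 = d i j 1 ∧
         (∀ ℓ, 2 ≤ ℓ → ℓ ≤ t → c i j ℓ = c i j (ℓ - 1) + d i j ℓ - 1) ∧
         c i j t = 0)) ∧
      -- (e) edge indicators of the selected graph
      (∀ i j : Fin n, i < j → ∀ p, 1 ≤ p → p ≤ t →
        (((G p).Adj i j → 1 - d i j p ≤ y i j) ∧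
         (¬ (G p).Adj i j → y i j ≤ d i j p)))) ↔
    (∃ s' : ℤ, 1 ≤ s' ∧ s' ≤ t ∧
      ∃ S : Finset (Fin n), k ≤ S.card ∧
        ∀ u ∈ S, ∀ v ∈ S, ¬ (G s').Adj u v) :=
  crossComposition_correct_general n k t G
end
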